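/- The MPW solution is the unique solution for TUX games satisfying efficiency, 2-standardness, and Sobolev consistency (with respect to the restriction operator r*). -/

import Mathlib

open Finset BigOperators

namespace TUX

/-- A (raw) game in partition function form: assigns a real worth to each
coalition together with a partition (of the outside players). -/
abbrev Game := Finset ℕ → Finset (Finset ℕ) → ℝ

/-- A TU game (characteristic function). -/
abbrev TUGame := Finset ℕ → ℝ

/-- A solution for TUX games: given a player set and a game, assigns payoffs. -/
abbrev Sol := Finset ℕ → Game → ℕ → ℝ

/-- `w` is a genuine TUX game: the empty coalition has worth 0. -/
def IsTUX (w : Game) : Prop := ∀ π, w ∅ π = 0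

/-- `π` is a partition of the finite set `M`. -/
def IsPartition (M : Finset ℕ) (π : Finset (Finset ℕ)) : Prop :=
  (∀ B ∈ π, B ⊆ M) ∧ ∅ ∉ π ∧ ∀ x ∈ M, (π.filter (fun B => x ∈ B)).card = 1

instance (M : Finset ℕ) : DecidablePred (IsPartition M) := fun π => by
  unfold IsPartition; infer_instance

/-- The finite set of all partitions of `M`. -/
def partitionsOf (M : Finset ℕ) : Finset (Finset (Finset ℕ)) :=
  (M.powerset.powerset).filter (IsPartition M)

/-- The Ewens(θ = 1) probability of the partition `π` of `M`:
`p*_M(π) = ∏_{B ∈ π} (|B| - 1)! / |M|!`. -/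
noncomputable def pstar (M : Finset ℕ) (π : Finset (Finset ℕ)) : ℝ :=
  (∏ B ∈ π, ((B.card - 1).factorial : ℝ)) / (M.card.factorial : ℝ)

/-- The block of `π` containing `j` (junk if `π` is not a partition containing `j`). -/
def blockOf (π : Finset (Finset ℕ)) (j : ℕ) : Finset ℕ :=
  (π.filter (fun B => j ∈ B)).sup id

/-- Add player `i` to the block `B` of `π`. -/
def addToBlock (π : Finset (Finset ℕ)) (i : ℕ) (B : Finset ℕ) : Finset (Finset ℕ) :=
  insert (insert i B) (π.erase B)

/-- The restriction operator `r⋆` removing a single player `i` from a game on `N`: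
`w₋ᵢ(S,π) = (1/(n-s)) (w(S, π₊ᵢ⇝∅) + ∑_{j ∈ N∖(S∪{i})} w(S, π₊ᵢ⇝π(j)))`. -/
noncomputable def restrict1 (N : Finset ℕ) (w : Game) (i : ℕ) : Game :=
  fun S π =>
    ((N.card : ℝ) - (S.card : ℝ))⁻¹ *
      (w S (insert {i} π) + ∑ j ∈ (N \ S).erase i, w S (addToBlock π i (blockOf π j)))

/-- Iterated removal of a list of players. -/
noncomputable def restrictL : Finset ℕ → Game → List ℕ → Game
  | _, w, [] => w
  | N, w, i :: l => restrictL (N.erase i) (restrict1 N w i) l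

/-- Removal of a set of players (via the increasing enumeration; by path
independence of `r⋆` the order is immaterial). -/
noncomputable def restrictSet (N : Finset ℕ) (w : Game) (T : Finset ℕ) : Game :=
  restrictL N w (T.sort (· ≤ ·))

/-- The average TU game `v̄_w` of a TUX game `w` on `N`. -/
noncomputable def avg (N : Finset ℕ) (w : Game) : TUGame :=
  fun S => ∑ π ∈ partitionsOf (N \ S), pstar (N \ S) π * w S π

/-- The auxiliary TU game `v*_w(S) = w₋(N∖S)(S,∅)`. -/
noncomputable def auxGame (N : Finset ℕ) (w : Game) : TUGame :=
  fun S => restrictSet N w (N \ S) S ∅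

/-- The Shapley value of a TU game on player set `N`. -/
noncomputable def shapley (N : Finset ℕ) (v : TUGame) (i : ℕ) : ℝ :=
  ∑ S ∈ (N.erase i).powerset,
    (((S.card.factorial : ℝ) * ((N.card - S.card - 1).factorial : ℝ)) / (N.card.factorial : ℝ)) *
      (v (insert i S) - v S)

/-- The MPW solution: the Shapley value of the average game. -/
noncomputable def MPW (N : Finset ℕ) (w : Game) (i : ℕ) : ℝ := shapley N (avg N w) i

/-- The MPW solution as a solution for TUX games. -/
noncomputable def MPWsol : Sol := fun N w i => MPW N w i

/-- The scaled Dirac TUX game `δ_{T,τ}` on `N`. -/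
noncomputable def scaledDirac (N T : Finset ℕ) (τ : Finset (Finset ℕ)) : Game :=
  fun S π => if S = T ∧ π = τ then (pstar (N \ T) τ)⁻¹ else 0

/-- `τ₋S`: remove the players of `S` from each block of `τ`, discarding empty blocks. -/
def partRemove (τ : Finset (Finset ℕ)) (S : Finset ℕ) : Finset (Finset ℕ) :=
  (τ.image (fun B => B \ S)).erase ∅

/-- The Sobolev-reduced TUX game `w₋ⱼ^{So,φ}` on `N ∖ {j}`. -/
noncomputable def sobRed (N : Finset ℕ) (φ : Sol) (w : Game) (j : ℕ) : Game :=
  fun S π =>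
    ((S.card : ℝ) / ((N.card : ℝ) - 1)) * (w (insert j S) π - φ N w j) +
      (1 - (S.card : ℝ) / ((N.card : ℝ) - 1)) * restrict1 N w j S π

/-- The Hart–Mas-Colell reduced TUX game `w₋T^{HM,φ}` on `N ∖ T`. -/
noncomputable def hmRed (N : Finset ℕ) (φ : Sol) (w : Game) (T : Finset ℕ) : Game :=
  fun S π => w (S ∪ T) π - ∑ j ∈ T, φ (S ∪ T) (restrictSet N w (N \ (S ∪ T))) j

/-- Efficiency for TUX games. -/
def EfficientX (φ : Sol) : Prop :=
  ∀ (N : Finset ℕ) (w : Game), IsTUX w → ∑ i ∈ N, φ N w i = w N ∅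

/-- Balanced contributions for TUX games (w.r.t. the restriction operator `r⋆`). -/
def BalancedContributionsX (φ : Sol) : Prop :=
  ∀ (N : Finset ℕ) (w : Game), IsTUX w → ∀ i ∈ N, ∀ j ∈ N,
    φ N w i - φ (N.erase j) (restrict1 N w j) i
      = φ N w j - φ (N.erase i) (restrict1 N w i) j

/-- 2-standardness for TUX games. -/
def TwoStandardX (φ : Sol) : Prop :=
  ∀ i j : ℕ, i ≠ j → ∀ w : Game, IsTUX w →
    φ {i, j} w i
      = w {i} {({j} : Finset ℕ)}
        + (w {i, j} ∅ - w {j} {({i} : Finset ℕ)} - w {i} {({j} : Finset ℕ)}) / 2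

/-- Sobolev consistency for TUX games. -/
def SobolevConsistentX (φ : Sol) : Prop :=
  ∀ (N : Finset ℕ) (w : Game), IsTUX w → ∀ i ∈ N, ∀ j ∈ N, i ≠ j →
    φ N w i = φ (N.erase j) (sobRed N φ w j) i

/-- Hart–Mas-Colell consistency (single-player removal) for TUX games. -/
def HMConsistentX (φ : Sol) : Prop :=
  ∀ (N : Finset ℕ) (w : Game), IsTUX w → ∀ i ∈ N, ∀ j ∈ N, i ≠ j →
    φ N w i = φ (N.erase j) (hmRed N φ w {j}) i

/-- Set Hart–Mas-Colell consistency (removal of a coalition) for TUX games. -/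
def SetHMConsistentX (φ : Sol) : Prop :=
  ∀ (N : Finset ℕ) (w : Game), IsTUX w → ∀ i ∈ N, ∀ T ⊆ N.erase i,
    φ N w i = φ (N \ T) (hmRed N φ w T) i

/-- The finite set of embedded coalitions `(T,τ)` of `N` with `T ≠ ∅`. -/
def embeddedNE (N : Finset ℕ) : Finset (Finset ℕ × Finset (Finset ℕ)) :=
  (N.powerset ×ˢ N.powerset.powerset).filter
    (fun p => p.1.Nonempty ∧ IsPartition (N \ p.1) p.2)

end TUX

/-!
Averaging over the Ewens(1) distribution commutes with the restriction operator `r⋆`: this is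
the Chinese-restaurant recursion for Ewens(1) random partitions. Hence the average game of a
Sobolev-reduced TUX game is the Sobolev-reduced TU game of the average game, and MPW inherits
Sobolev consistency from the Shapley value, where it amounts to a Pascal-type recursion of the
Shapley weights. Efficiency of the Shapley value follows from its Sobolev consistency by induction.

For uniqueness, induct on `n = |N|`; the cases `n ≤ 2` are efficiency and 2-standardness. For
`n ≥ 3`, Sobolev consistency and the induction hypothesis give `d_a = -d_b / (n - 1)` for the
deviations `d = φ - MPW`, so `d_i = d_i / (n - 1)²` and `d_i = 0`.
-/

namespace TUX

noncomputable def shapleyWeight (n s : ℕ) : ℝ := s.factorial * (n - s - 1).factorial / n.factorial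

lemma shapley_eq_sum_shapleyWeight (N : Finset ℕ) (v : TUGame) (i : ℕ) :
    shapley N v i
      = ∑ S ∈ (N.erase i).powerset, shapleyWeight N.card S.card * (v (insert i S) - v S) :=
  rfl

lemma shapleyWeight_mul_succ (n s : ℕ) :
    shapleyWeight n s * (s + 1) = shapleyWeight (n + 1) (s + 1) * (n + 1) := by
  simp only [shapleyWeight, Nat.factorial_succ, show n + 1 - (s + 1) - 1 = n - s - 1 by omega]
  push_cast
  field_simp

lemma shapleyWeight_eq_add {n s : ℕ} (hs : s < n) :
    shapleyWeight n s = shapleyWeight (n + 1) s + shapleyWeight (n + 1) (s + 1) := by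
  obtain ⟨t, rfl⟩ := Nat.exists_eq_add_of_lt hs
  simp only [shapleyWeight, show s + t + 1 + 1 - s - 1 = t + 1 by omega,
    show s + t + 1 + 1 - (s + 1) - 1 = t by omega, show s + t + 1 - s - 1 = t by omega,
    Nat.factorial_succ]
  push_cast
  field_simp
  ring

lemma sum_shapleyWeight (P : Finset ℕ) :
    ∑ S ∈ P.powerset, shapleyWeight (P.card + 1) S.card = 1 := by
  have hterm : ∀ m ∈ range (P.card + 1),
      P.card.choose m • shapleyWeight (P.card + 1) m = ((P.card : ℝ) + 1)⁻¹ := by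
    intro m hm
    have hmP : m ≤ P.card := Nat.lt_succ_iff.mp (mem_range.mp hm)
    have hchoose : (P.card.choose m : ℝ) * m.factorial * (P.card - m).factorial
        = P.card.factorial := by
      exact_mod_cast Nat.choose_mul_factorial_mul_factorial hmP
    rw [nsmul_eq_mul, shapleyWeight, show P.card + 1 - m - 1 = P.card - m by omega,
      Nat.factorial_succ]
    push_cast
    field_simp
    linear_combination hchoose
  rw [sum_powerset_apply_card, sum_congr rfl hterm, sum_const,
    card_range, nsmul_eq_mul]
  push_cast
  field_simp

lemma shapley_congr {N : Finset ℕ} {v v' : TUGame} {i : ℕ} (hi : i ∈ N)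
    (h : ∀ S ⊆ N, v S = v' S) : shapley N v i = shapley N v' i := by
  refine sum_congr rfl fun S hS => ?_
  have hSN : S ⊆ N := (mem_powerset.mp hS).trans (erase_subset i N)
  rw [h S hSN, h _ (insert_subset hi hSN)]

lemma shapley_eq_sum_powerset_erase_erase {N : Finset ℕ} (v : TUGame) {i j : ℕ} (hj : j ∈ N)
    (hij : i ≠ j) :
    shapley N v i = ∑ S ∈ ((N.erase i).erase j).powerset,
      (shapleyWeight N.card S.card * (v (insert i S) - v S)
        + shapleyWeight N.card (S.card + 1) * (v (insert i (insert j S)) - v (insert j S))) := by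
  set P := (N.erase i).erase j
  have hjP : j ∉ P := notMem_erase j _
  have hP : N.erase i = insert j P := (insert_erase (mem_erase.mpr ⟨hij.symm, hj⟩)).symm
  rw [shapley_eq_sum_shapleyWeight, hP, sum_powerset_insert hjP, ← sum_add_distrib]
  refine sum_congr rfl fun S hS => ?_
  have hjS : j ∉ S := fun h => hjP (mem_powerset.mp hS h)
  rw [card_insert_of_notMem hjS]

noncomputable def sobRedTU (N : Finset ℕ) (v : TUGame) (j : ℕ) (c : ℝ) : TUGame := fun S =>
  ((S.card : ℝ) / ((N.card : ℝ) - 1)) * (v (insert j S) - c)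
    + (1 - (S.card : ℝ) / ((N.card : ℝ) - 1)) * v S

lemma shapley_sobRedTU {N : Finset ℕ} (v : TUGame) (c : ℝ) {i j : ℕ} (hi : i ∈ N) (hj : j ∈ N)
    (hij : i ≠ j) :
    shapley (N.erase j) (sobRedTU N v j c) i
      = shapley N v i + (shapley N v j - c) / ((N.card : ℝ) - 1) := by
  set P := (N.erase j).erase i with hP
  set k := (N.erase j).card with hk
  have hNk : N.card = k + 1 := (card_erase_add_one hj).symm
  have hPk : P.card + 1 = k := card_erase_add_one (mem_erase.mpr ⟨hij, hi⟩)
  have hk0 : (k : ℝ) ≠ 0 := by rw [← hPk]; positivity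
  have hc : c = ∑ S ∈ P.powerset, shapleyWeight k S.card * c := by
    rw [← sum_mul, ← hPk, sum_shapleyWeight, one_mul]
  conv_rhs => rw [hc]
  rw [shapley_eq_sum_powerset_erase_erase v hj hij,
    shapley_eq_sum_powerset_erase_erase v hi hij.symm,
    erase_right_comm, ← hP, shapley_eq_sum_shapleyWeight, ← hk, ← sum_sub_distrib,
    sum_div, ← sum_add_distrib, hNk]
  refine sum_congr rfl fun S hS => ?_
  have hSP : S ⊆ P := mem_powerset.mp hS
  have hiS : i ∉ S := fun h => notMem_erase i _ (hSP h)
  have hsk : S.card < k := hPk ▸ Nat.lt_succ_of_le (card_le_card hSP)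
  have e₁ := shapleyWeight_mul_succ k S.card
  have e₂ := shapleyWeight_eq_add hsk
  simp only [sobRedTU, card_insert_of_notMem hiS, insert_comm j i, hNk]
  push_cast at e₁ ⊢
  rw [add_sub_cancel_right]
  field_simp
  linear_combination v (insert i (insert j S)) * e₁ + v (insert i S) * (k * e₂ - e₁)
    + v (insert j S) * (e₂ - e₁) + v S * (e₁ - (k + 1) * e₂)

lemma sum_shapley (N : Finset ℕ) (v : TUGame) : ∑ i ∈ N, shapley N v i = v N - v ∅ := by
  induction N using Finset.strongInduction generalizing v with
  | H N ih =>
  rcases N.eq_empty_or_nonempty with rfl | ⟨j, hj⟩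
  · simp
  rcases (N.erase j).eq_empty_or_nonempty with hN | ⟨i, hi⟩
  · obtain rfl : N = {j} := by rw [← insert_erase hj, hN]; rfl
    simp [shapley]
  set v' := sobRedTU N v j (shapley N v j)
  have hred : ∀ i ∈ N.erase j, shapley N v i = shapley (N.erase j) v' i := fun i hi => by
    rw [shapley_sobRedTU v _ (mem_of_mem_erase hi) hj (ne_of_mem_erase hi)]
    simp
  have hcard : ((N.erase j).card : ℝ) = N.card - 1 := by
    rw [← card_erase_add_one hj]
    push_cast
    ring
  have hcard0 : ((N.card : ℝ) - 1) ≠ 0 := by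
    rw [← hcard]
    exact Nat.cast_ne_zero.mpr (card_ne_zero_of_mem hi)
  rw [← add_sum_erase N _ hj, sum_congr rfl hred, ih _ (erase_ssubset hj)]
  simp only [v', sobRedTU, insert_erase hj, hcard, div_self hcard0, card_empty]
  ring

lemma shapley_pair {i j : ℕ} (hij : i ≠ j) (v : TUGame) :
    shapley {i, j} v i = (v {i} - v ∅ + v {i, j} - v {j}) / 2 := by
  have hj : i ∉ ({j} : Finset ℕ) := notMem_singleton.mpr hij
  rw [shapley_eq_sum_shapleyWeight, card_insert_of_notMem hj, erase_insert hj,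
    ← insert_empty_eq j, sum_powerset_insert (notMem_empty j)]
  norm_num [shapleyWeight]
  ring

lemma mem_partitionsOf {M : Finset ℕ} {π : Finset (Finset ℕ)} :
    π ∈ partitionsOf M ↔ IsPartition M π := by
  simp only [partitionsOf, mem_filter, mem_powerset, and_iff_right_iff_imp]
  exact fun h B hB => mem_powerset.mpr (h.1 B hB)

lemma partitionsOf_empty : partitionsOf ∅ = {∅} := by
  ext π
  rw [mem_partitionsOf, mem_singleton]
  refine ⟨fun h => eq_empty_of_forall_notMem fun B hB => ?_, fun h => h ▸ by
    simp [IsPartition]⟩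
  exact h.2.1 (subset_empty.mp (h.1 B hB) ▸ hB)

namespace IsPartition

variable {M : Finset ℕ} {π : Finset (Finset ℕ)}

lemma filter_mem_eq (h : IsPartition M π) {x : ℕ} (hx : x ∈ M) :
    π.filter (fun B => x ∈ B) = {blockOf π x} := by
  obtain ⟨B, hB⟩ := card_eq_one.mp (h.2.2 x hx)
  simp [blockOf, hB]

lemma blockOf_mem_filter (h : IsPartition M π) {x : ℕ} (hx : x ∈ M) :
    blockOf π x ∈ π.filter (fun B => x ∈ B) := by
  rw [h.filter_mem_eq hx]
  exact mem_singleton_self _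

lemma blockOf_mem (h : IsPartition M π) {x : ℕ} (hx : x ∈ M) : blockOf π x ∈ π :=
  (mem_filter.mp (h.blockOf_mem_filter hx)).1

lemma mem_blockOf (h : IsPartition M π) {x : ℕ} (hx : x ∈ M) : x ∈ blockOf π x :=
  (mem_filter.mp (h.blockOf_mem_filter hx)).2

lemma eq_blockOf (h : IsPartition M π) {x : ℕ} {B : Finset ℕ} (hB : B ∈ π) (hx : x ∈ B) :
    B = blockOf π x := by
  have hB' : B ∈ π.filter (fun B => x ∈ B) := mem_filter.mpr ⟨hB, hx⟩
  rwa [h.filter_mem_eq (h.1 B hB hx), mem_singleton] at hB'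

lemma nonempty (h : IsPartition M π) {B : Finset ℕ} (hB : B ∈ π) : B.Nonempty :=
  nonempty_iff_ne_empty.mpr fun h0 => h.2.1 (h0 ▸ hB)

lemma disjoint (h : IsPartition M π) {B C : Finset ℕ} (hB : B ∈ π) (hC : C ∈ π) (hBC : B ≠ C) :
    Disjoint B C :=
  disjoint_left.mpr fun _ hxB hxC => hBC ((h.eq_blockOf hB hxB).trans (h.eq_blockOf hC hxC).symm)

lemma sum_blockOf (h : IsPartition M π) (g : Finset ℕ → ℝ) :
    ∑ k ∈ M, g (blockOf π k) = ∑ B ∈ π, (B.card : ℝ) * g B := by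
  have hM : M = π.biUnion id := by
    ext x
    simp only [mem_biUnion, id]
    exact ⟨fun hx => ⟨_, h.blockOf_mem hx, h.mem_blockOf hx⟩, fun ⟨B, hB, hx⟩ => h.1 B hB hx⟩
  rw [hM, sum_biUnion (t := id) fun B hB C hC hBC => h.disjoint hB hC hBC]
  refine sum_congr rfl fun B hB => ?_
  rw [id, sum_congr rfl fun k hk => by rw [← h.eq_blockOf hB hk], sum_const,
    nsmul_eq_mul]

lemma insert (h : IsPartition M π) {B : Finset ℕ} (hB : B.Nonempty) (hBM : Disjoint B M) :
    IsPartition (B ∪ M) (insert B π) := by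
  refine ⟨?_, ?_, fun x hx => ?_⟩
  · rintro C hC
    rcases mem_insert.mp hC with rfl | hC
    exacts [subset_union_left, (h.1 C hC).trans subset_union_right]
  · rintro h0
    rcases mem_insert.mp h0 with h0 | h0
    exacts [hB.ne_empty h0.symm, h.2.1 h0]
  rw [filter_insert]
  by_cases hxB : x ∈ B
  · have hxM : x ∉ M := disjoint_left.mp hBM hxB
    rw [if_pos hxB, filter_eq_empty_iff.mpr fun C hC hxC => hxM (h.1 C hC hxC)]
    rfl
  · rw [if_neg hxB]
    exact h.2.2 x ((mem_union.mp hx).resolve_left hxB)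

lemma erase (h : IsPartition M π) {B : Finset ℕ} (hB : B ∈ π) :
    IsPartition (M \ B) (π.erase B) := by
  refine ⟨fun C hC => ?_, fun h0 => h.2.1 (mem_of_mem_erase h0), fun x hx => ?_⟩
  · have hC' := mem_of_mem_erase hC
    exact subset_sdiff.mpr ⟨h.1 C hC', h.disjoint hC' hB (ne_of_mem_erase hC)⟩
  obtain ⟨hxM, hxB⟩ := mem_sdiff.mp hx
  rw [filter_erase, h.filter_mem_eq hxM, erase_eq_of_notMem]
  · rfl
  · exact fun hB' => hxB (mem_singleton.mp hB' ▸ h.mem_blockOf hxM)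

end IsPartition

section restaurant

variable {M : Finset ℕ} {π : Finset (Finset ℕ)} {j : ℕ}

lemma addToBlock_empty (h : ∅ ∉ π) : addToBlock π j ∅ = insert {j} π := by
  rw [addToBlock, erase_eq_of_notMem h]
  rfl

lemma isPartition_addToBlock (hj : j ∉ M) (h : IsPartition M π) {B : Finset ℕ}
    (hB : B ∈ insert ∅ π) : IsPartition (insert j M) (addToBlock π j B) := by
  rcases mem_insert.mp hB with rfl | hB
  · rw [addToBlock_empty h.2.1, insert_eq]
    exact h.insert (singleton_nonempty j) (disjoint_singleton_left.mpr hj)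
  · have hM : insert j M = insert j B ∪ (M \ B) := by
      rw [insert_union, union_sdiff_of_subset (h.1 B hB)]
    rw [hM]
    refine (h.erase hB).insert (insert_nonempty j B) ?_
    exact disjoint_insert_left.mpr ⟨fun hjM => hj (mem_sdiff.mp hjM).1,
      disjoint_sdiff⟩

lemma blockOf_addToBlock (hj : j ∉ M) (h : IsPartition M π) {B : Finset ℕ}
    (hB : B ∈ insert ∅ π) : blockOf (addToBlock π j B) j = insert j B :=
  ((isPartition_addToBlock hj h hB).eq_blockOf (mem_insert_self _ _)
    (mem_insert_self j B)).symm

/-- Inverse of `addToBlock`, with `∅` as second component when `j` forms a block of its own. -/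
def detach (π' : Finset (Finset ℕ)) (j : ℕ) : Σ _ : Finset (Finset ℕ), Finset ℕ :=
  ⟨(insert ((blockOf π' j).erase j) (π'.erase (blockOf π' j))).erase ∅, (blockOf π' j).erase j⟩

lemma detach_mem (hj : j ∉ M) {π' : Finset (Finset ℕ)} (h : IsPartition (insert j M) π') :
    detach π' j ∈ (partitionsOf M).sigma (fun π => insert ∅ π) := by
  simp only [detach, mem_sigma, mem_partitionsOf, mem_insert]
  set B := blockOf π' j
  have hB : B ∈ π' := h.blockOf_mem (mem_insert_self j M)
  have hjB : j ∈ B := h.mem_blockOf (mem_insert_self j M)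
  have hrest := h.erase hB
  have h0 : ∅ ∉ π'.erase B := fun h0 => h.2.1 (mem_of_mem_erase h0)
  rcases (B.erase j).eq_empty_or_nonempty with hE | hE
  · have hBj : B = {j} := by rw [← insert_erase hjB, hE]; rfl
    rw [hE, erase_insert h0]
    refine ⟨?_, Or.inl rfl⟩
    rwa [hBj, sdiff_singleton_eq_erase, erase_insert hj, ← hBj] at hrest
  · rw [erase_insert_of_ne hE.ne_empty, erase_eq_of_notMem h0]
    refine ⟨?_, Or.inr (mem_insert_self _ _)⟩
    have hM : M = B.erase j ∪ (insert j M \ B) := by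
      have := h.1 B hB
      grind
    rw [hM]
    exact hrest.insert hE (disjoint_of_subset_left (erase_subset j B) disjoint_sdiff)

lemma detach_addToBlock (hj : j ∉ M) (h : IsPartition M π) {B : Finset ℕ}
    (hB : B ∈ insert ∅ π) : detach (addToBlock π j B) j = ⟨π, B⟩ := by
  have hjB : j ∉ B := by
    rcases mem_insert.mp hB with rfl | hB
    exacts [notMem_empty j, fun hjB => hj (h.1 B hB hjB)]
  have hnew : insert j B ∉ π.erase B :=
    fun hC => hj (h.1 _ (mem_of_mem_erase hC) (mem_insert_self j B))
  rw [detach, blockOf_addToBlock hj h hB, erase_insert hjB, addToBlock,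
    erase_insert hnew]
  congr
  rcases mem_insert.mp hB with rfl | hB
  · rw [erase_eq_of_notMem h.2.1, erase_insert h.2.1]
  · rw [insert_erase hB, erase_eq_of_notMem h.2.1]

lemma addToBlock_detach {π' : Finset (Finset ℕ)} (h : IsPartition M π') (hj : j ∈ M) :
    addToBlock (detach π' j).1 j (detach π' j).2 = π' := by
  set B := blockOf π' j
  have hB : B ∈ π' := h.blockOf_mem hj
  have hjB : j ∈ B := h.mem_blockOf hj
  have hE : B.erase j ∉ π'.erase B := fun hE => by
    obtain ⟨x, hx⟩ := h.nonempty (mem_of_mem_erase hE)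
    exact ne_of_mem_erase hE ((h.eq_blockOf (mem_of_mem_erase hE) hx).trans
      (h.eq_blockOf hB (mem_of_mem_erase hx)).symm)
  have h0 : ∅ ∉ π'.erase B := fun h0 => h.2.1 (mem_of_mem_erase h0)
  rw [detach, addToBlock, insert_erase hjB, erase_right_comm,
    erase_insert hE, erase_eq_of_notMem h0, insert_erase hB]

lemma pstar_insert_singleton (hj : j ∉ M) (h : IsPartition M π) :
    pstar (insert j M) (insert {j} π) = pstar M π / (M.card + 1) := by
  have hnew : {j} ∉ π := fun hj' => hj (h.1 _ hj' (mem_singleton_self j))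
  rw [pstar, pstar, prod_insert hnew, card_insert_of_notMem hj, Nat.factorial_succ]
  push_cast
  simp only [card_singleton, Nat.sub_self, Nat.factorial_zero, Nat.cast_one, one_mul]
  field_simp

lemma pstar_addToBlock (hj : j ∉ M) (h : IsPartition M π) {B : Finset ℕ} (hB : B ∈ π) :
    pstar (insert j M) (addToBlock π j B) = B.card * pstar M π / (M.card + 1) := by
  have hjB : j ∉ B := fun hjB => hj (h.1 B hB hjB)
  have hnew : insert j B ∉ π.erase B :=
    fun hC => hj (h.1 _ (mem_of_mem_erase hC) (mem_insert_self j B))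
  have hfac : ((B.card + 1 - 1).factorial : ℝ) = B.card * (B.card - 1).factorial := by
    exact_mod_cast (Nat.mul_factorial_pred (h.nonempty hB).card_pos.ne').symm
  rw [pstar, pstar, addToBlock, prod_insert hnew, ← mul_prod_erase π _ hB,
    card_insert_of_notMem hj, card_insert_of_notMem hjB, hfac, Nat.factorial_succ]
  push_cast
  field_simp

/-- Chinese restaurant recursion: `j` either opens a new block or joins the block of one of the
`|M|` other players. -/
lemma sum_partitionsOf_insert (hj : j ∉ M) (F : Finset (Finset ℕ) → ℝ) :
    ∑ π' ∈ partitionsOf (insert j M), pstar (insert j M) π' * F π'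
      = ((M.card : ℝ) + 1)⁻¹ * ∑ π ∈ partitionsOf M, pstar M π *
          (F (insert {j} π) + ∑ k ∈ M, F (addToBlock π j (blockOf π k))) := by
  have hsigma : ∑ π' ∈ partitionsOf (insert j M), pstar (insert j M) π' * F π'
      = ∑ p ∈ (partitionsOf M).sigma (fun π => insert ∅ π),
          pstar (insert j M) (addToBlock p.1 j p.2) * F (addToBlock p.1 j p.2) := by
    refine sum_nbij' (fun π' => detach π' j) (fun p => addToBlock p.1 j p.2)
      (fun π' hπ' => detach_mem hj (mem_partitionsOf.mp hπ')) (fun p hp => ?_)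
      (fun π' hπ' => addToBlock_detach (mem_partitionsOf.mp hπ') (mem_insert_self j M))
      (fun p hp => ?_) (fun π' hπ' => by rw [addToBlock_detach (mem_partitionsOf.mp hπ')
        (mem_insert_self j M)])
    all_goals obtain ⟨hπ, hB⟩ := mem_sigma.mp hp
    · exact mem_partitionsOf.mpr (isPartition_addToBlock hj (mem_partitionsOf.mp hπ) hB)
    · exact detach_addToBlock hj (mem_partitionsOf.mp hπ) hB
  rw [hsigma, sum_sigma, mul_sum]
  refine sum_congr rfl fun π hπ => ?_
  have h := mem_partitionsOf.mp hπ
  rw [sum_insert h.2.1, addToBlock_empty h.2.1, pstar_insert_singleton hj h,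
    sum_congr rfl fun B hB => by rw [pstar_addToBlock hj h hB],
    h.sum_blockOf fun B => F (addToBlock π j B), mul_add, mul_add, mul_sum, mul_sum]
  congr 1
  · ring
  · exact sum_congr rfl fun B _ => by ring

end restaurant

lemma sum_pstar (M : Finset ℕ) : ∑ π ∈ partitionsOf M, pstar M π = 1 := by
  induction M using Finset.induction_on with
  | empty => simp [partitionsOf_empty, pstar]
  | insert j M hj ih =>
    have h := sum_partitionsOf_insert hj fun _ => 1
    simp only [mul_one, sum_const, nsmul_eq_mul, ← sum_mul, ih] at h
    rw [h]
    field_simp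
    ring

lemma sum_partitionsOf_singleton (x : ℕ) (F : Finset (Finset ℕ) → ℝ) :
    ∑ π ∈ partitionsOf {x}, pstar {x} π * F π = F {{x}} := by
  simpa [partitionsOf_empty, pstar] using sum_partitionsOf_insert (notMem_empty x) F

section avg

variable {N : Finset ℕ} (w : Game)

lemma avg_self : avg N w N = w N ∅ := by
  simp [avg, partitionsOf_empty, pstar]

lemma avg_empty {w : Game} (hw : IsTUX w) : avg N w ∅ = 0 :=
  sum_eq_zero fun π _ => by rw [hw π, mul_zero]

lemma avg_of_sdiff_eq_singleton {S : Finset ℕ} {k : ℕ} (h : N \ S = {k}) :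
    avg N w S = w S {{k}} := by
  rw [avg, h, sum_partitionsOf_singleton]

lemma avg_restrict1 {j : ℕ} (hj : j ∈ N) {S : Finset ℕ} (hS : S ⊆ N.erase j) :
    avg (N.erase j) (restrict1 N w j) S = avg N w S := by
  set M := N.erase j \ S
  have hjM : j ∉ M := fun h => notMem_erase j N (mem_sdiff.mp h).1
  have hNS : N \ S = insert j M := by grind
  have hcard : (N.card : ℝ) - S.card = M.card + 1 := by
    rw [← card_sdiff_add_card_eq_card (hS.trans (erase_subset j N)), hNS,
      card_insert_of_notMem hjM]
    push_cast
    ring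
  rw [avg, avg, hNS, sum_partitionsOf_insert hjM, mul_sum]
  refine sum_congr rfl fun π _ => ?_
  rw [restrict1, hNS, erase_insert hjM, hcard]
  ring

lemma avg_sobRed (φ : Sol) {j : ℕ} (hj : j ∈ N) {S : Finset ℕ} (hS : S ⊆ N.erase j) :
    avg (N.erase j) (sobRed N φ w j) S = sobRedTU N (avg N w) j (φ N w j) S := by
  set a := (S.card : ℝ) / ((N.card : ℝ) - 1)
  set M := N.erase j \ S
  have hM : M = N \ insert j S := by grind
  have hjoin : ∑ π ∈ partitionsOf M, pstar M π * w (insert j S) π = avg N w (insert j S) := by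
    rw [avg, hM]
  have hstay : ∑ π ∈ partitionsOf M, pstar M π * restrict1 N w j S π = avg N w S :=
    avg_restrict1 w hj hS
  calc avg (N.erase j) (sobRed N φ w j) S
      = ∑ π ∈ partitionsOf M, (a * (pstar M π * w (insert j S) π) - a * φ N w j * pstar M π
          + (1 - a) * (pstar M π * restrict1 N w j S π)) :=
        sum_congr rfl fun π _ => by rw [sobRed]; ring
    _ = a * avg N w (insert j S) - a * φ N w j * 1 + (1 - a) * avg N w S := by
        rw [sum_add_distrib, sum_sub_distrib, ← mul_sum, ← mul_sum,
          ← mul_sum, hjoin, hstay, sum_pstar]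
    _ = sobRedTU N (avg N w) j (φ N w j) S := by rw [sobRedTU]; ring

end avg

lemma isTUX_sobRed {N : Finset ℕ} {w : Game} (hw : IsTUX w) (φ : Sol) (j : ℕ) :
    IsTUX (sobRed N φ w j) := fun π => by
  simp [sobRed, restrict1, show ∀ π, w ∅ π = 0 from hw]

lemma efficientX_MPWsol : EfficientX MPWsol := fun N w hw => by
  unfold MPWsol MPW
  rw [sum_shapley, avg_self, avg_empty hw, sub_zero]

lemma twoStandardX_MPWsol : TwoStandardX MPWsol := fun i j hij w hw => by
  have hi : ({i, j} : Finset ℕ) \ {i} = {j} := by grind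
  have hj : ({i, j} : Finset ℕ) \ {j} = {i} := by grind
  unfold MPWsol MPW
  rw [shapley_pair hij, avg_of_sdiff_eq_singleton w hi, avg_of_sdiff_eq_singleton w hj, avg_self,
    avg_empty hw]
  ring

lemma MPWsol_erase_sobRed {N : Finset ℕ} (w : Game) (φ : Sol) {i j : ℕ} (hi : i ∈ N) (hj : j ∈ N)
    (hij : i ≠ j) :
    MPWsol (N.erase j) (sobRed N φ w j) i
      = MPWsol N w i + (MPWsol N w j - φ N w j) / ((N.card : ℝ) - 1) := by
  unfold MPWsol MPW
  rw [shapley_congr (mem_erase.mpr ⟨hij, hi⟩) fun S hS => avg_sobRed w φ hj hS,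
    shapley_sobRedTU _ _ hi hj hij]

lemma sobolevConsistentX_MPWsol : SobolevConsistentX MPWsol := fun N w _ i hi j hj hij => by
  rw [MPWsol_erase_sobRed w MPWsol hi hj hij, sub_self, zero_div, add_zero]

lemma eq_MPWsol {φ : Sol} (hEF : EfficientX φ) (h2S : TwoStandardX φ)
    (hSC : SobolevConsistentX φ) (N : Finset ℕ) (w : Game) (hw : IsTUX w) :
    ∀ i ∈ N, φ N w i = MPWsol N w i := by
  induction N using Finset.strongInduction generalizing w with
  | H N ih =>
  intro i hi
  have hdev : ∀ a ∈ N, ∀ b ∈ N, a ≠ b → φ N w a - MPWsol N w a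
      = -(φ N w b - MPWsol N w b) / ((N.card : ℝ) - 1) := by
    intro a ha b hb hab
    have h := hSC N w hw a ha b hb hab
    rw [ih _ (erase_ssubset hb) _ (isTUX_sobRed hw φ b) a (mem_erase.mpr ⟨hab, ha⟩),
      MPWsol_erase_sobRed w φ ha hb hab] at h
    rw [h]
    ring
  rcases (N.erase i).eq_empty_or_nonempty with h1 | ⟨j, hj⟩
  · obtain rfl : N = {i} := by rw [← insert_erase hi, h1]; rfl
    simpa using (hEF {i} w hw).trans (efficientX_MPWsol {i} w hw).symm
  have hij : i ≠ j := (ne_of_mem_erase hj).symm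
  rcases ((N.erase i).erase j).eq_empty_or_nonempty with h2 | ⟨k, hk⟩
  · obtain rfl : N = {i, j} := by
      rw [← insert_erase hi, ← insert_erase hj, h2]; rfl
    exact (h2S i j hij w hw).trans (twoStandardX_MPWsol i j hij w hw).symm
  set m : ℝ := N.card - 1 with hm_def
  have hm : 2 ≤ m := by
    rw [hm_def, ← card_erase_add_one hi, ← card_erase_add_one hj]
    push_cast
    linarith [(Nat.one_le_cast (α := ℝ)).mpr (card_pos.mpr ⟨k, hk⟩)]
  have hi' := hdev i hi j (mem_of_mem_erase hj) hij
  have hj' := hdev j (mem_of_mem_erase hj) i hi hij.symm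
  field_simp at hi' hj'
  have hsq : (φ N w i - MPWsol N w i) * (m * m - 1) = 0 := by
    linear_combination m * hi' - hj'
  have hsq_ne : m * m - 1 ≠ 0 := by nlinarith
  exact sub_eq_zero.mp ((mul_eq_zero.mp hsq).resolve_right hsq_ne)

end TUX

open TUX in
/-- The MPW solution is the unique solution for TUX games
satisfying efficiency, 2-standardness, and Sobolev consistency. -/
theorem MPW_unique_EF_2S_SC :
    (EfficientX MPWsol ∧ TwoStandardX MPWsol ∧ SobolevConsistentX MPWsol) ∧
      ∀ φ : Sol, EfficientX φ → TwoStandardX φ → SobolevConsistentX φ →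
        ∀ (N : Finset ℕ) (w : Game), IsTUX w → ∀ i ∈ N, φ N w i = MPWsol N w i :=
  ⟨⟨efficientX_MPWsol, twoStandardX_MPWsol, sobolevConsistentX_MPWsol⟩,
    fun _ hEF h2S hSC => eq_MPWsol hEF h2S hSC⟩
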